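/- Fix an integer L ≥ 1, positive real constants δ_idle, δ_coll, δ_succ, and a real number M ≥ 0. Then the function p ↦ M·(δ_idle/(L p) + (1/(L p (1−p)^{L−1}) − 1/(L p) − 1)·δ_coll + δ_succ) is convex on the open interval (0,1). (This is the convexity-in-p part of the paper's Lemma 1 for the asymptotic expected contention-period duration T_COP(M,p).) -/

import Mathlib

/-!
The identity `1 / (p (1 - p)ⁿ) - 1 / p = ∑_{j=1}^{n} (1 - p)⁻ʲ` (a geometric sum) writes the
function as a nonnegative combination of `p⁻¹`, the powers `(1 - p)⁻ʲ` and a constant, each of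
which is convex on `(0, 1)`.
-/

open Set

theorem ConvexOn.sum {𝕜 E β ι : Type*} [Semiring 𝕜] [PartialOrder 𝕜] [AddCommMonoid E]
    [AddCommMonoid β] [PartialOrder β] [IsOrderedAddMonoid β] [SMul 𝕜 E] [Module 𝕜 β]
    {s : Set E} (hs : Convex 𝕜 s) (t : Finset ι) {f : ι → E → β}
    (hf : ∀ i ∈ t, ConvexOn 𝕜 s (f i)) : ConvexOn 𝕜 s fun x => ∑ i ∈ t, f i x := by
  classical
  induction t using Finset.induction_on with
  | empty => simpa using convexOn_const 0 hs
  | insert i t hi ih =>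
    simp only [Finset.sum_insert hi]
    exact (hf i (Finset.mem_insert_self i t)).add
      (ih fun j hj => hf j (Finset.mem_insert_of_mem hj))

theorem convexOn_inv_one_sub_pow (k : ℕ) : ConvexOn ℝ (Iio 1) fun p : ℝ => (1 - p)⁻¹ ^ k := by
  have h := (convexOn_zpow (𝕜 := ℝ) (-k)).comp_affineMap
    (AffineMap.const ℝ ℝ (1 : ℝ) - AffineMap.id ℝ ℝ)
  have hpre : (AffineMap.const ℝ ℝ (1 : ℝ) - AffineMap.id ℝ ℝ) ⁻¹' Ioi 0 = Iio 1 := by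
    ext p; simp
  rw [hpre] at h
  exact h.congr fun p _ => by simp

theorem sum_range_inv_one_sub_pow_succ {p : ℝ} (hp₀ : p ≠ 0) (hp₁ : p ≠ 1) (n : ℕ) :
    ∑ j ∈ Finset.range n, (1 - p)⁻¹ ^ (j + 1) = ((1 - p)⁻¹ ^ n - 1) / p := by
  have hq : 1 - p ≠ 0 := sub_ne_zero.2 hp₁.symm
  have hx : (1 - p)⁻¹ ≠ 1 := by rwa [Ne, inv_eq_one, sub_eq_self]
  simp_rw [pow_succ, ← Finset.sum_mul, geom_sum_eq hx]
  have hx_sub : (1 - p)⁻¹ - 1 = p * (1 - p)⁻¹ := by field_simp; ring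
  rw [hx_sub]
  field_simp

theorem convexOn_one_div_mul_one_sub_pow_sub_one_div (n : ℕ) :
    ConvexOn ℝ (Ioo 0 1) fun p : ℝ => 1 / (p * (1 - p) ^ n) - 1 / p := by
  have h := ConvexOn.sum (convex_Ioo 0 1) (Finset.range n) fun j _ =>
    (convexOn_inv_one_sub_pow (j + 1)).subset Ioo_subset_Iio_self (convex_Ioo 0 1)
  refine h.congr fun p hp => (sum_range_inv_one_sub_pow_succ hp.1.ne' hp.2.ne n).trans ?_
  rw [inv_pow]
  ring

theorem TCOP_convex_in_p_general (L : ℕ)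
    (δidle δcoll δsucc : ℝ) (hidle : 0 < δidle) (hcoll : 0 < δcoll)
    (M : ℝ) (hM : 0 ≤ M) :
    ConvexOn ℝ (Set.Ioo (0 : ℝ) 1)
      (fun p : ℝ => M * (δidle / (L * p)
        + (1 / (L * p * (1 - p) ^ (L - 1)) - 1 / (L * p) - 1) * δcoll + δsucc)) := by
  have hinv : ConvexOn ℝ (Ioo 0 1) fun p : ℝ => p⁻¹ :=
    ((convexOn_zpow (-1)).subset Ioo_subset_Ioi_self (convex_Ioo 0 1)).congr fun p _ => by simp
  have h := (hinv.smul (c := M * δidle / L) (by positivity)).add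
    (((convexOn_one_div_mul_one_sub_pow_sub_one_div (L - 1)).smul (c := M * δcoll / L)
      (by positivity)).add (convexOn_const (M * (δsucc - δcoll)) (convex_Ioo 0 1)))
  refine h.congr fun p _ => ?_
  simp only [Pi.add_apply, smul_eq_mul]
  ring

/-- Convexity in `p` of the asymptotic expected contention-period duration
`T_COP(M,p) = M·(δ_idle/(L p) + (1/(L p (1−p)^{L−1}) − 1/(L p) − 1)·δ_coll + δ_succ)`
on `(0,1)`, for `L ≥ 1`, positive constants and `M ≥ 0`. -/
theorem TCOP_convex_in_p (L : ℕ) (hL : 1 ≤ L)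
    (δidle δcoll δsucc : ℝ) (hidle : 0 < δidle) (hcoll : 0 < δcoll) (hsucc : 0 < δsucc)
    (M : ℝ) (hM : 0 ≤ M) :
    ConvexOn ℝ (Set.Ioo (0 : ℝ) 1)
      (fun p : ℝ => M * (δidle / (L * p)
        + (1 / (L * p * (1 - p) ^ (L - 1)) - 1 / (L * p) - 1) * δcoll + δsucc)) :=
  TCOP_convex_in_p_general L δidle δcoll δsucc hidle hcoll M hM
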